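/- arXiv:2404.15461 — 6 statements merged into one kernel-verified Lean document; each statement's English description precedes it below -/
import Mathlib

section
/- Let W be a nonempty finite type and b : Set W → ℝ a belief function on W (b(∅) = 0, b(Set.univ) = 1, b(X) ≥ 0 for all X, and b(A ∪ B) ≥ b(A) + b(B) whenever A ∩ B = ∅) which is moreover 2-monotone: b(A ∪ B) + b(A ∩ B) ≥ b(A) + b(B) for all A, B ⊆ W. Then the neighbourhood N_1 := {X ⊆ W | b(X) = 1} contains its core: b(⋂₀ {X ⊆ W | b(X) = 1}) = 1. In particular N_1 is augmented (upward closed and containing its core). -/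
/-! Superadditivity and nonnegativity make `b` monotone with maximum `b univ = 1`, and then
2-monotonicity gives `1 + 1 ≤ b (A ∪ B) + b (A ∩ B) ≤ 1 + b (A ∩ B)` for `b A = b B = 1`.
So the sets of belief `1` form a filter, and on a finite type a filter contains the
intersection of all its members. -/

section BeliefFunction

variable {α : Type*} {b : Set α → ℝ}

theorem monotone_of_superadditive (hnonneg : ∀ X, 0 ≤ b X)
    (hsuper : ∀ A B, A ∩ B = ∅ → b A + b B ≤ b (A ∪ B)) : Monotone b := by
  intro X Y hXY
  have h := hsuper X (Y \ X) (Set.inter_sdiff_self X Y)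
  rw [Set.union_sdiff_cancel hXY] at h
  linarith [hnonneg (Y \ X)]

theorem inter_eq_one_of_two_monotone (hle : ∀ X, b X ≤ 1)
    (h2mono : ∀ A B, b A + b B ≤ b (A ∪ B) + b (A ∩ B)) {A B : Set α}
    (hA : b A = 1) (hB : b B = 1) : b (A ∩ B) = 1 := by
  linarith [h2mono A B, hle (A ∪ B), hle (A ∩ B)]

def certaintyFilter (huniv : b Set.univ = 1) (hnonneg : ∀ X, 0 ≤ b X)
    (hsuper : ∀ A B, A ∩ B = ∅ → b A + b B ≤ b (A ∪ B))
    (h2mono : ∀ A B, b A + b B ≤ b (A ∪ B) + b (A ∩ B)) : Filter α :=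
  have hmono := monotone_of_superadditive hnonneg hsuper
  have hle X : b X ≤ 1 := huniv ▸ hmono (Set.subset_univ X)
  { sets := {X | b X = 1}
    univ_sets := huniv
    sets_of_superset := fun {_ Y} hX hXY => le_antisymm (hle Y) (hX ▸ hmono hXY)
    inter_sets := inter_eq_one_of_two_monotone hle h2mono }

end BeliefFunction

theorem N_one_contains_core_and_augmented_general (W : Type*) [Fintype W]
    (b : Set W → ℝ)
    (huniv : b Set.univ = 1) (hnonneg : ∀ X : Set W, 0 ≤ b X)
    (hsuper : ∀ A B : Set W, A ∩ B = ∅ → b A + b B ≤ b (A ∪ B))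
    (h2mono : ∀ A B : Set W, b A + b B ≤ b (A ∪ B) + b (A ∩ B)) :
    b (⋂₀ {X : Set W | b X = 1}) = 1 ∧
    (∀ X Y : Set W, X ∈ {Z : Set W | b Z = 1} → X ⊆ Y → Y ∈ {Z : Set W | b Z = 1}) ∧
    ⋂₀ {X : Set W | b X = 1} ∈ {X : Set W | b X = 1} := by
  let F := certaintyFilter huniv hnonneg hsuper h2mono
  have hcore : ⋂₀ {X : Set W | b X = 1} ∈ F :=
    (Filter.sInter_mem (Set.toFinite _)).2 fun _ hX => hX
  exact ⟨hcore, fun _ _ hX hXY => F.sets_of_superset hX hXY, hcore⟩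

theorem N_one_contains_core_and_augmented (W : Type*) [Fintype W] [Nonempty W]
    (b : Set W → ℝ)
    (hempty : b ∅ = 0) (huniv : b Set.univ = 1) (hnonneg : ∀ X : Set W, 0 ≤ b X)
    (hsuper : ∀ A B : Set W, A ∩ B = ∅ → b A + b B ≤ b (A ∪ B))
    (h2mono : ∀ A B : Set W, b A + b B ≤ b (A ∪ B) + b (A ∩ B)) :
    b (⋂₀ {X : Set W | b X = 1}) = 1 ∧
    (∀ X Y : Set W, X ∈ {Z : Set W | b Z = 1} → X ⊆ Y → Y ∈ {Z : Set W | b Z = 1}) ∧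
    ⋂₀ {X : Set W | b X = 1} ∈ {X : Set W | b X = 1} :=
  N_one_contains_core_and_augmented_general W b huniv hnonneg hsuper h2mono
end

section
/- Let W be a nonempty finite type, m : Set W → ℝ a basic probability assignment (m(B) ≥ 0 for all B, m(∅) = 0, and the sum of m(B) over all B ⊆ W equals 1), and bel(A) := ∑_{B ⊆ A} m(B) the induced Dempster–Shafer belief function. Let ℰ be the set of minimal elements under set inclusion of {X ⊆ W | bel(X) > 0} (the elementary sets). Then for every A ⊆ W, bel(A) ≥ ∑_{E ∈ ℰ, E ⊆ A} bel(E): the belief of A is at least the sum of the beliefs of the elementary sets contained in A. -/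
/-!
A proper subset of an elementary set `E` with positive mass would already have positive belief,
so `bel E = m E`. The elementary sets inside `A` are therefore distinct terms of the sum of
nonnegative masses defining `bel A`.
-/

open Classical Finset

namespace DempsterShafer

variable {W M : Type*} [Fintype W] [AddCommMonoid M] {m : Set W → M}

noncomputable def belief (m : Set W → M) (A : Set W) : M := ∑ B, if B ⊆ A then m B else 0

theorem belief_eq_sum_filter (m : Set W → M) (A : Set W) :
    belief m A = ∑ B ∈ univ.filter (· ⊆ A), m B :=
  (sum_filter _ _).symm

variable [PartialOrder M] [IsOrderedAddMonoid M]

theorem le_belief (hm : 0 ≤ m) (A : Set W) : m A ≤ belief m A := by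
  rw [belief_eq_sum_filter]
  exact single_le_sum (fun B _ => hm B) (mem_filter.2 ⟨mem_univ A, subset_rfl⟩)

theorem sum_le_belief (hm : 0 ≤ m) {s : Finset (Set W)} {A : Set W} (hs : ∀ E ∈ s, E ⊆ A) :
    ∑ E ∈ s, m E ≤ belief m A := by
  rw [belief_eq_sum_filter]
  exact sum_le_sum_of_subset_of_nonneg (fun E hE => mem_filter.2 ⟨mem_univ E, hs E hE⟩)
    (fun B _ _ => hm B)

theorem belief_eq_of_minimal (hm : 0 ≤ m) {E : Set W} (hE : Minimal (0 < belief m ·) E) :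
    belief m E = m E := by
  rw [belief_eq_sum_filter]
  refine sum_eq_single_of_mem E (mem_filter.2 ⟨mem_univ E, subset_rfl⟩) fun B hB hBE => ?_
  have hBE' : B ⊆ E := (mem_filter.1 hB).2
  by_contra hmB
  have hpos : 0 < belief m B := (lt_of_le_of_ne (hm B) (Ne.symm hmB)).trans_le (le_belief hm B)
  exact hBE (hE.eq_of_le hpos hBE')

end DempsterShafer

open DempsterShafer in
theorem bel_ge_sum_of_elementary_subsets_general (W : Type*) [Fintype W]
    (m : Set W → ℝ)
    (hm_nonneg : ∀ B : Set W, 0 ≤ m B)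
    (bel : Set W → ℝ)
    (hbel : ∀ A : Set W, bel A = ∑ B : Set W, if B ⊆ A then m B else 0) :
    ∀ A : Set W,
      ∑ E ∈ Finset.univ.filter
          (fun E : Set W => Minimal (fun X : Set W => bel X > 0) E ∧ E ⊆ A),
        bel E ≤ bel A := by
  intro A
  obtain rfl : bel = belief m := funext hbel
  calc _ = ∑ E ∈ univ.filter (fun E => Minimal (0 < belief m ·) E ∧ E ⊆ A), m E :=
        sum_congr rfl fun E hE => belief_eq_of_minimal hm_nonneg (mem_filter.1 hE).2.1
    _ ≤ belief m A := sum_le_belief hm_nonneg fun E hE => (mem_filter.1 hE).2.2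

theorem bel_ge_sum_of_elementary_subsets (W : Type*) [Fintype W] [Nonempty W]
    (m : Set W → ℝ)
    (hm_nonneg : ∀ B : Set W, 0 ≤ m B) (hm_empty : m ∅ = 0)
    (hm_total : ∑ B : Set W, m B = 1)
    (bel : Set W → ℝ)
    (hbel : ∀ A : Set W, bel A = ∑ B : Set W, if B ⊆ A then m B else 0) :
    ∀ A : Set W,
      ∑ E ∈ Finset.univ.filter
          (fun E : Set W => Minimal (fun X : Set W => bel X > 0) E ∧ E ⊆ A),
        bel E ≤ bel A :=
  bel_ge_sum_of_elementary_subsets_general W m hm_nonneg bel hbel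
end

section
/- Let W be a nonempty finite type and b : Set W → ℝ a finitely additive probability (b(∅) = 0, b(Set.univ) = 1, b(X) ≥ 0 for all X, and b(A ∪ B) = b(A) + b(B) whenever A ∩ B = ∅). Then the core ⋂₀ {X ⊆ W | b(X) = 1} equals the union of all elementary sets, i.e., the union of all minimal elements under set inclusion of {X ⊆ W | b(X) > 0}. -/
theorem core_eq_union_of_elementary_sets (W : Type*) [Fintype W] [Nonempty W]
    (b : Set W → ℝ)
    (hempty : b ∅ = 0) (huniv : b Set.univ = 1) (hnonneg : ∀ X : Set W, 0 ≤ b X)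
    (hadd : ∀ A B : Set W, A ∩ B = ∅ → b (A ∪ B) = b A + b B) :
    ⋂₀ {X : Set W | b X = 1} =
      ⋃₀ {E : Set W | Minimal (fun X : Set W => b X > 0) E} := by
  have hsplit : ∀ A X : Set W, b A = b (A ∩ X) + b (A \ X) := by
    intro A X
    have h := hadd (A ∩ X) (A \ X) (by ext x; simp; tauto)
    rwa [show (A ∩ X) ∪ (A \ X) = A by ext x; simp] at h
  have hmono : ∀ A B : Set W, A ⊆ B → b A ≤ b B := by
    intro A B hAB
    have h := hadd A (B \ A) (by ext x; simp)
    rw [show A ∪ (B \ A) = B from by ext x; simp; tauto] at h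
    nlinarith [hnonneg (B \ A)]
  ext w
  simp only [Set.mem_sInter, Set.mem_sUnion, Set.mem_setOf_eq]
  constructor
  · intro hw
    refine ⟨{w}, ?_, rfl⟩
    have hpos : 0 < b {w} := by
      by_contra h
      push_neg at h
      have h0 : b ({w} : Set W) = 0 := le_antisymm h (hnonneg _)
      have h1 : b ({w}ᶜ : Set W) = 1 := by
        have := hadd {w} {w}ᶜ (by simp)
        rw [Set.union_compl_self] at this
        linarith
      exact (hw _ h1) rfl
    constructor
    · exact hpos
    · intro Y hY hYw
      rcases Set.subset_singleton_iff_eq.mp hYw with h | h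
      · rw [h, hempty] at hY; linarith
      · rw [h]
  · rintro ⟨E, ⟨hE, hmin⟩, hwE⟩ X hX
    have hEX : b (E \ X) = 0 := by
      have h := hadd (E \ X) X (by ext x; simp)
      have hsub : b ((E \ X) ∪ X) ≤ 1 := by
        rw [← huniv]; exact hmono _ _ (Set.subset_univ _)
      have := hnonneg (E \ X)
      rw [hX] at h
      linarith
    have hbEX : 0 < b (E ∩ X) := by
      have := hsplit E X
      linarith
    have : E ⊆ E ∩ X := hmin hbEX Set.inter_subset_left
    exact (this hwE).2
end

section
/- Let W be a nonempty finite type, m : Set W → ℝ a basic probability assignment (m(B) ≥ 0 for all B, m(∅) = 0, ∑_{B ⊆ W} m(B) = 1), and bel(A) := ∑_{B ⊆ A} m(B) the induced Dempster–Shafer belief function. Let ℰ be the set of minimal elements under set inclusion of {X ⊆ W | bel(X) > 0} (the elementary sets). Then ∑_{E ∈ ℰ} bel(E) ≤ 1: the sum of the beliefs of all elementary sets is at most 1. -/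
open Classical

/-!
A focal element `B` (one with `m B > 0`) gives positive belief to every superset, so two
elementary sets containing `B` would have an intersection of positive belief below both; by
minimality they coincide. Hence, expanding `bel E = ∑_{B ⊆ E} m B` and exchanging the sums, each
mass `m B` is counted at most once, and the total is at most `∑ B, m B = 1`.
-/

theorem Minimal.eq_of_common_lower_bound {α : Type*} [SemilatticeInf α] {P : α → Prop} {b x y : α}
    (hP : ∀ z, b ≤ z → P z) (hx : Minimal P x) (hy : Minimal P y) (hbx : b ≤ x) (hby : b ≤ y) :
    x = y := by
  have hxy : P (x ⊓ y) := hP _ (le_inf hbx hby)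
  exact (hx.eq_of_le hxy inf_le_left).symm.trans (hy.eq_of_le hxy inf_le_right)

theorem Finset.sum_sum_ite_le_sum {ι κ : Type*} (s : Finset ι) (t : Finset κ) (r : ι → κ → Prop)
    [∀ i k, Decidable (r i k)] (m : κ → ℝ) (hm : ∀ k ∈ t, 0 ≤ m k)
    (hr : ∀ k ∈ t, 0 < m k → (s.filter (r · k)).card ≤ 1) :
    ∑ i ∈ s, ∑ k ∈ t, (if r i k then m k else 0) ≤ ∑ k ∈ t, m k := by
  rw [Finset.sum_comm]
  refine Finset.sum_le_sum fun k hk => ?_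
  rw [← Finset.sum_filter, Finset.sum_const]
  rcases (hm k hk).eq_or_lt with hzero | hpos
  · simp [← hzero]
  · simpa using nsmul_le_nsmul_left hpos.le (hr k hk hpos)

theorem sum_bel_elementary_le_one_general (W : Type*) [Fintype W]
    (m : Set W → ℝ)
    (hm_nonneg : ∀ B : Set W, 0 ≤ m B)
    (hm_total : ∑ B : Set W, m B = 1)
    (bel : Set W → ℝ)
    (hbel : ∀ A : Set W, bel A = ∑ B : Set W, if B ⊆ A then m B else 0) :
    ∑ E ∈ Finset.univ.filter (fun E : Set W => Minimal (fun X : Set W => bel X > 0) E),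
      bel E ≤ 1 := by
  have bel_pos_of_subset : ∀ B A : Set W, 0 < m B → B ⊆ A → bel A > 0 := fun B A hB hBA => by
    rw [hbel]
    refine hB.trans_le ?_
    simpa [hBA] using Finset.single_le_sum (f := fun C : Set W => if C ⊆ A then m C else 0)
      (fun C _ => by split_ifs <;> simp [hm_nonneg]) (Finset.mem_univ B)
  calc ∑ E ∈ Finset.univ.filter (Minimal fun X => bel X > 0), bel E
      = ∑ E ∈ Finset.univ.filter (Minimal fun X => bel X > 0),
          ∑ B : Set W, if B ⊆ E then m B else 0 := Finset.sum_congr rfl fun E _ => hbel E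
    _ ≤ ∑ B : Set W, m B := by
      refine Finset.sum_sum_ite_le_sum _ _ (fun E B => B ⊆ E) m (fun B _ => hm_nonneg B) ?_
      intro B _ hB
      refine Finset.card_le_one.mpr fun E hE E' hE' => ?_
      rw [Finset.mem_filter] at hE hE'
      exact Minimal.eq_of_common_lower_bound (bel_pos_of_subset B · hB)
        (Finset.mem_filter.mp hE.1).2 (Finset.mem_filter.mp hE'.1).2 hE.2 hE'.2
    _ = 1 := hm_total

theorem sum_bel_elementary_le_one (W : Type*) [Fintype W] [Nonempty W]
    (m : Set W → ℝ)
    (hm_nonneg : ∀ B : Set W, 0 ≤ m B) (hm_empty : m ∅ = 0)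
    (hm_total : ∑ B : Set W, m B = 1)
    (bel : Set W → ℝ)
    (hbel : ∀ A : Set W, bel A = ∑ B : Set W, if B ⊆ A then m B else 0) :
    ∑ E ∈ Finset.univ.filter (fun E : Set W => Minimal (fun X : Set W => bel X > 0) E),
      bel E ≤ 1 :=
  sum_bel_elementary_le_one_general W m hm_nonneg hm_total bel hbel
end

section
/- Let W be a nonempty finite type and b : Set W → ℝ a finitely additive probability (b(∅) = 0, b(Set.univ) = 1, b(X) ≥ 0 for all X, and b(A ∪ B) = b(A) + b(B) whenever A ∩ B = ∅). Then the sum of b(E) over all elementary sets E (the minimal elements under set inclusion of {X ⊆ W | b(X) > 0}) equals 1. -/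
/-!
Two distinct elementary sets `E ≠ F` satisfy `b (E ∩ F) = 0`, since otherwise minimality would
force `E = E ∩ F = F`. Hence `b (E \ F) = b E > 0`, and minimality again gives `E ⊆ E \ F`:
elementary sets are pairwise disjoint, so `b` of their union `U` is the sum of their weights.
Finally `b Uᶜ = 0`, because a positive `Uᶜ` would contain an elementary set, which lies in `U`.
-/

open Classical

section

variable {W : Type*} {b : Set W → ℝ}

theorem apply_biUnion_eq_sum_of_pairwiseDisjoint (hempty : b ∅ = 0)
    (hadd : ∀ A B : Set W, A ∩ B = ∅ → b (A ∪ B) = b A + b B)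
    {ι : Type*} (s : Finset ι) {f : ι → Set W} (hf : (s : Set ι).PairwiseDisjoint f) :
    b (⋃ i ∈ s, f i) = ∑ i ∈ s, b (f i) := by
  induction s using Finset.induction_on with
  | empty => simp [hempty]
  | insert a s ha ih =>
    rw [Finset.coe_insert, Set.pairwiseDisjoint_insert] at hf
    have hdisj : Disjoint (f a) (⋃ i ∈ s, f i) :=
      Set.disjoint_iUnion₂_right.mpr fun i hi => hf.2 i hi (ne_of_mem_of_not_mem hi ha).symm
    rw [Finset.set_biUnion_insert, Finset.sum_insert ha,
      hadd _ _ (Set.disjoint_iff_inter_eq_empty.mp hdisj), ih hf.1]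

theorem disjoint_of_minimal_pos (hnonneg : ∀ X : Set W, 0 ≤ b X)
    (hadd : ∀ A B : Set W, A ∩ B = ∅ → b (A ∪ B) = b A + b B) {E F : Set W}
    (hE : Minimal (fun X => 0 < b X) E) (hF : Minimal (fun X => 0 < b X) F) (hne : E ≠ F) :
    Disjoint E F := by
  have hEF : b (E ∩ F) = 0 := by
    by_contra h
    have hpos : 0 < b (E ∩ F) := (hnonneg _).lt_of_ne' h
    exact hne <| ((hE.le_of_le hpos Set.inter_subset_left).trans Set.inter_subset_right).antisymm
      ((hF.le_of_le hpos Set.inter_subset_right).trans Set.inter_subset_left)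
  have hdiff : b (E \ F) = b E := by
    have hsplit := hadd (E \ F) (E ∩ F)
      (Set.disjoint_iff_inter_eq_empty.mp Set.disjoint_sdiff_inter)
    rw [Set.sdiff_union_inter, hEF] at hsplit
    linarith
  exact (Set.subset_sdiff.mp (hE.le_of_le (hdiff ▸ hE.prop) Set.sdiff_subset)).2

theorem apply_compl_eq_zero_of_minimal_pos_subset [Finite W] (hempty : b ∅ = 0)
    (hnonneg : ∀ X : Set W, 0 ≤ b X) {U : Set W}
    (hU : ∀ E, Minimal (fun X => 0 < b X) E → E ⊆ U) : b Uᶜ = 0 := by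
  by_contra h
  obtain ⟨E, hEU, hE⟩ :=
    exists_minimal_le_of_wellFoundedLT (fun X => 0 < b X) Uᶜ ((hnonneg Uᶜ).lt_of_ne' h)
  have hE_empty : E = ∅ :=
    (Set.subset_compl_iff_disjoint_right.mp hEU).eq_bot_of_le (hU E hE)
  exact hE.prop.ne' (hE_empty ▸ hempty)

end

theorem sum_prob_elementary_eq_one_general (W : Type*) [Fintype W]
    (b : Set W → ℝ)
    (hempty : b ∅ = 0) (huniv : b Set.univ = 1) (hnonneg : ∀ X : Set W, 0 ≤ b X)
    (hadd : ∀ A B : Set W, A ∩ B = ∅ → b (A ∪ B) = b A + b B) :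
    ∑ E ∈ Finset.univ.filter (fun E : Set W => Minimal (fun X : Set W => b X > 0) E),
      b E = 1 := by
  set M := Finset.univ.filter (fun E : Set W => Minimal (fun X : Set W => b X > 0) E)
  have hM : ∀ E, E ∈ M ↔ Minimal (fun X => 0 < b X) E := by simp [M]
  have hdisj : (M : Set (Set W)).PairwiseDisjoint id := fun E hE F hF hne =>
    disjoint_of_minimal_pos hnonneg hadd ((hM E).1 hE) ((hM F).1 hF) hne
  set U := ⋃ E ∈ M, E
  have hUc : b Uᶜ = 0 := apply_compl_eq_zero_of_minimal_pos_subset hempty hnonneg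
    fun E hE => Set.subset_biUnion_of_mem (u := id) ((hM E).2 hE)
  calc ∑ E ∈ M, b E = b U := (apply_biUnion_eq_sum_of_pairwiseDisjoint hempty hadd M hdisj).symm
    _ = b U + b Uᶜ := by rw [hUc, add_zero]
    _ = b Set.univ := by rw [← hadd _ _ (Set.inter_compl_self U), Set.union_compl_self]
    _ = 1 := huniv

theorem sum_prob_elementary_eq_one (W : Type*) [Fintype W] [Nonempty W]
    (b : Set W → ℝ)
    (hempty : b ∅ = 0) (huniv : b Set.univ = 1) (hnonneg : ∀ X : Set W, 0 ≤ b X)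
    (hadd : ∀ A B : Set W, A ∩ B = ∅ → b (A ∪ B) = b A + b B) :
    ∑ E ∈ Finset.univ.filter (fun E : Set W => Minimal (fun X : Set W => b X > 0) E),
      b E = 1 :=
  sum_prob_elementary_eq_one_general W b hempty huniv hnonneg hadd
end

section
/- Let W be a nonempty finite type and b : Set W → ℝ a finitely additive probability (b(∅) = 0, b(Set.univ) = 1, b(X) ≥ 0 for all X, and b(A ∪ B) = b(A) + b(B) whenever A ∩ B = ∅). For X ⊆ W let int(X) be the union of all elementary sets (minimal elements under inclusion of {Y | b(Y) > 0}) contained in X, and let the core be ⋂₀ {Y ⊆ W | b(Y) = 1}. If X is well-defined, i.e., X ∩ core = int(X), then b(X) = b(int(X)). -/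
/-!
Finite additivity and nonnegativity make `b` monotone and give `b (A ∪ B) + b (A ∩ B) = b A + b B`,
so intersecting with a set of full belief does not change belief. As `W` is finite, the core is a
finite intersection of sets of belief one and hence has belief one itself. Therefore
`b X = b (X ∩ core)`, which is `b (int X)` for a well-defined `X`.
-/

namespace FinitelyAdditive

variable {α : Type*} {b : Set α → ℝ}

theorem union_add_inter (hadd : ∀ A B : Set α, A ∩ B = ∅ → b (A ∪ B) = b A + b B)
    (A B : Set α) : b (A ∪ B) + b (A ∩ B) = b A + b B := by
  have hunion : b (A ∪ B) = b A + b (B \ A) := by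
    rw [← hadd A (B \ A) (Set.inter_sdiff_self A B), Set.union_sdiff_self]
  have hB : b B = b (B \ A) + b (B ∩ A) := by
    rw [← hadd (B \ A) (B ∩ A) (Set.disjoint_iff_inter_eq_empty.mp Set.disjoint_sdiff_inter),
      Set.sdiff_union_inter]
  rw [hunion, hB, Set.inter_comm]
  ring

theorem mono (hnonneg : ∀ X : Set α, 0 ≤ b X)
    (hadd : ∀ A B : Set α, A ∩ B = ∅ → b (A ∪ B) = b A + b B)
    {A B : Set α} (hAB : A ⊆ B) : b A ≤ b B := by
  have h := hadd A (B \ A) (Set.inter_sdiff_self A B)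
  rw [Set.union_sdiff_cancel hAB] at h
  linarith [hnonneg (B \ A)]

theorem inter_eq_of_eq_univ (hnonneg : ∀ X : Set α, 0 ≤ b X)
    (hadd : ∀ A B : Set α, A ∩ B = ∅ → b (A ∪ B) = b A + b B)
    {C : Set α} (hC : b C = b Set.univ) (X : Set α) : b (X ∩ C) = b X := by
  have hle := mono hnonneg hadd (Set.inter_subset_left : X ∩ C ⊆ X)
  have hunion := mono hnonneg hadd (Set.subset_univ (X ∪ C))
  linarith [union_add_inter hadd X C]

theorem sInter_eq_univ (hnonneg : ∀ X : Set α, 0 ≤ b X)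
    (hadd : ∀ A B : Set α, A ∩ B = ∅ → b (A ∪ B) = b A + b B)
    {T : Set (Set α)} (hT : T.Finite) (hfull : ∀ Y ∈ T, b Y = b Set.univ) :
    b (⋂₀ T) = b Set.univ := by
  induction T, hT using Set.Finite.induction_on with
  | empty => rw [Set.sInter_empty]
  | @insert Y T _ _ ih =>
    rw [Set.sInter_insert, Set.inter_comm,
      inter_eq_of_eq_univ hnonneg hadd (hfull Y (Set.mem_insert Y T))]
    exact ih fun Z hZ => hfull Z (Set.mem_insert_of_mem Y hZ)

theorem sInter_setOf_eq_one [Finite α] (hnonneg : ∀ X : Set α, 0 ≤ b X)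
    (hadd : ∀ A B : Set α, A ∩ B = ∅ → b (A ∪ B) = b A + b B) (huniv : b Set.univ = 1) :
    b (⋂₀ {Y : Set α | b Y = 1}) = 1 := by
  have h := sInter_eq_univ hnonneg hadd (Set.toFinite {Y : Set α | b Y = 1})
    fun Y hY => hY.trans huniv.symm
  rwa [huniv] at h

end FinitelyAdditive

theorem well_defined_set_belief_eq_interior_general (W : Type*) [Fintype W]
    (b : Set W → ℝ)
    (huniv : b Set.univ = 1) (hnonneg : ∀ X : Set W, 0 ≤ b X)
    (hadd : ∀ A B : Set W, A ∩ B = ∅ → b (A ∪ B) = b A + b B)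
    (X : Set W)
    (hwd : X ∩ ⋂₀ {Y : Set W | b Y = 1} =
      ⋃₀ {E : Set W | Minimal (fun Y : Set W => b Y > 0) E ∧ E ⊆ X}) :
    b X = b (⋃₀ {E : Set W | Minimal (fun Y : Set W => b Y > 0) E ∧ E ⊆ X}) := by
  have hcore := FinitelyAdditive.sInter_setOf_eq_one hnonneg hadd huniv
  rw [← hwd, FinitelyAdditive.inter_eq_of_eq_univ hnonneg hadd (hcore.trans huniv.symm)]

theorem well_defined_set_belief_eq_interior (W : Type*) [Fintype W] [Nonempty W]
    (b : Set W → ℝ)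
    (hempty : b ∅ = 0) (huniv : b Set.univ = 1) (hnonneg : ∀ X : Set W, 0 ≤ b X)
    (hadd : ∀ A B : Set W, A ∩ B = ∅ → b (A ∪ B) = b A + b B)
    (X : Set W)
    (hwd : X ∩ ⋂₀ {Y : Set W | b Y = 1} =
      ⋃₀ {E : Set W | Minimal (fun Y : Set W => b Y > 0) E ∧ E ⊆ X}) :
    b X = b (⋃₀ {E : Set W | Minimal (fun Y : Set W => b Y > 0) E ∧ E ⊆ X}) :=
  well_defined_set_belief_eq_interior_general W b huniv hnonneg hadd X hwd
end
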